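/- arXiv:1101.5067 — 3 statements merged into one kernel-verified Lean document; each statement's English description precedes it below -/
import Mathlib

section
/- Let S be a d-symbol with core C = C(S), and let δ = (c_0,…,c_{d−1}; k) be any d-hook data tuple. Then the multiset 𝓗^δ(C) of δ-lengths of the hooks of C is a sub-multiset of the multiset 𝓗^δ(S) of δ-lengths of the hooks of S. -/
/-- `X^{+s} = (X + s) ∪ {0,…,s−1}` for a β-set `X`. -/
def shiftUp (X : Finset ℕ) (s : ℕ) : Finset ℕ :=
  X.image (· + s) ∪ Finset.range s

/-- The `d`-symbol `s_d(X)` associated to a β-set `X`: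
`X_i^{(d)} = {k ∈ ℕ : i + k*d ∈ X}`. -/
def sd (d : ℕ) (X : Finset ℕ) : Fin d → Finset ℕ :=
  fun i => (X.filter fun a => a % d = (i : ℕ)).image fun a => a / d

/-- The inverse of `s_d`, recovering the β-set of a `d`-symbol. -/
def sdInv (d : ℕ) (S : Fin d → Finset ℕ) : Finset ℕ :=
  Finset.univ.biUnion fun i => (S i).image fun k => (i : ℕ) + k * d

/-- Hooks of a β-set `X`: pairs `(a,b)` with `a > b`, `a ∈ X`, `b ∉ X`. -/
def betaHooks (X : Finset ℕ) : Finset (ℕ × ℕ) :=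
  (X ×ˢ Finset.range (X.sup id + 1)).filter fun p => p.2 < p.1 ∧ p.2 ∉ X

/-- Hooks of a `d`-symbol `S`: quadruples `(a,b,i,j)` with `a ∈ S i`, `b ∉ S j`,
and either `a > b`, or `a = b` and `i > j`. -/
def symbolHooks {d : ℕ} (S : Fin d → Finset ℕ) : Finset (ℕ × ℕ × Fin d × Fin d) :=
  (Finset.range ((Finset.univ.sup fun i => (S i).sup id) + 1) ×ˢ
      Finset.range ((Finset.univ.sup fun i => (S i).sup id) + 1) ×ˢ
      (Finset.univ : Finset (Fin d)) ×ˢ (Finset.univ : Finset (Fin d))).filter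
    fun z => z.1 ∈ S z.2.2.1 ∧ z.2.1 ∉ S z.2.2.2 ∧
      (z.2.1 < z.1 ∨ (z.1 = z.2.1 ∧ z.2.2.2 < z.2.2.1))

/-- The partition `p(X)` of a β-set `X = {a_1 > … > a_t}`, as the multiset of the
nonzero numbers among `a_i − (t−i)`; the element `a` contributes the part
`a − #{b ∈ X : b < a}`. -/
def partitionOf (X : Finset ℕ) : Multiset ℕ :=
  Multiset.filter (· ≠ 0) (X.val.map fun a => a - (X.filter (· < a)).card)

/-- `r`, the maximal number of parts among the partitions `p(X_i)` of a `d`-symbol. -/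
def quotCard {d : ℕ} (S : Fin d → Finset ℕ) : ℕ :=
  Finset.univ.sup fun i => Multiset.card (partitionOf (S i))

/-- `Y` is the balanced quotient `Q(S)` of `S`: each `Y i` is the (unique) β-set of
cardinality `r` with `p(Y i) = p(S i)`, where `r` is the maximal number of parts
among the `p(S i)`. -/
def IsBalancedQuotient {d : ℕ} (S Y : Fin d → Finset ℕ) : Prop :=
  ∀ i, (Y i).card = quotCard S ∧ partitionOf (Y i) = partitionOf (S i)

/-- The core `C(S) = ([x_0],…,[x_{d−1}])` of a `d`-symbol, `x_i = |X_i|`. -/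
def coreSymbol {d : ℕ} (S : Fin d → Finset ℕ) : Fin d → Finset ℕ :=
  fun i => Finset.range (S i).card

/-- The `δ`-length `k(a−b) + c_i − c_j` of a hook `(a,b,i,j)`, for the
`d`-hook data tuple `δ = (c_0,…,c_{d−1};k)`. -/
noncomputable def hookLen {d : ℕ} (c : Fin d → ℝ) (k : ℝ)
    (z : ℕ × ℕ × Fin d × Fin d) : ℝ :=
  k * ((z.1 - z.2.1 : ℕ) : ℝ) + c z.2.2.1 - c z.2.2.2

/-- The multiset `𝓗^δ(S)` of `δ`-lengths of all hooks of `S`. -/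
noncomputable def hookLens {d : ℕ} (c : Fin d → ℝ) (k : ℝ)
    (S : Fin d → Finset ℕ) : Multiset ℝ :=
  (symbolHooks S).val.map (hookLen c k)

/-- `H_{ij}^ℓ(S)`, the set of hooks `(a,b,i,j)` of `S` with `a − b = ℓ`. -/
def Hij {d : ℕ} (S : Fin d → Finset ℕ) (i j : Fin d) (ℓ : ℕ) :
    Finset (ℕ × ℕ × Fin d × Fin d) :=
  (symbolHooks S).filter fun z => z.2.2.1 = i ∧ z.2.2.2 = j ∧ z.1 - z.2.1 = ℓ

/-- The sign-modified length `h̄^{δ_S}` (on hooks of the balanced quotient), where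
`x` records the cardinalities `x_i = |X_i|` of `S`, and `δ_S = (c_i + x_i k; k)`.
For a hook `z = (a,b,u,v)` with `ℓ = a − b`: relabelling so that `Δ = x_i − x_j ≥ 0`,
the sign is `+` if `z` lies in position `(i,j)`, or in position `(j,i)` with `ℓ > Δ`,
or in position `(j,i)` with `ℓ = Δ` and `i < j`; otherwise the sign is `−`. -/
noncomputable def signedLen {d : ℕ} (x : Fin d → ℕ) (c : Fin d → ℝ) (k : ℝ)
    (z : ℕ × ℕ × Fin d × Fin d) : ℝ :=
  if x z.2.2.2 ≤ x z.2.2.1 then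
    k * ((z.1 - z.2.1 : ℕ) : ℝ) + (c z.2.2.1 + (x z.2.2.1 : ℝ) * k)
      - (c z.2.2.2 + (x z.2.2.2 : ℝ) * k)
  else if x z.2.2.2 - x z.2.2.1 < z.1 - z.2.1 ∨
      (z.1 - z.2.1 = x z.2.2.2 - x z.2.2.1 ∧ (z.2.2.2 : ℕ) < (z.2.2.1 : ℕ)) then
    k * ((z.1 - z.2.1 : ℕ) : ℝ) + (c z.2.2.1 + (x z.2.2.1 : ℝ) * k)
      - (c z.2.2.2 + (x z.2.2.2 : ℝ) * k)
  else
    -(k * ((z.1 - z.2.1 : ℕ) : ℝ) + (c z.2.2.1 + (x z.2.2.1 : ℝ) * k)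
      - (c z.2.2.2 + (x z.2.2.2 : ℝ) * k))

/-- The permutation `σ_{d,ℓ,e}` of `ℕ`:
`σ(r(dℓ) + sd + t) = r(dℓ) + sd + ((t + re) mod d)`. -/
def twistFun (d ℓ e : ℕ) (n : ℕ) : ℕ :=
  d * ℓ * (n / (d * ℓ)) + d * (n % (d * ℓ) / d) + (n % d + n / (d * ℓ) * e) % d

/-! The number of hooks of a symbol `S` with `a − b = ℓ` in position `(i, j)` is the number of
`a ∈ X_i` with `ℓ ≤ a` and `a − ℓ ∉ X_j` (subject to `i > j` when `ℓ = 0`). Since at most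
`ℓ + |X_j|` elements `a` fail the last two conditions, this number is at least
`|X_i| − (|X_j| + ℓ)`, which is exactly the count for the core. As the `δ`-length of a hook only
depends on `(ℓ, i, j)`, the multiset inclusion follows. -/

open Finset

def hookKey {d : ℕ} (z : ℕ × ℕ × Fin d × Fin d) : ℕ × Fin d × Fin d :=
  (z.1 - z.2.1, z.2.2)

section

variable {d : ℕ}

lemma hookLens_eq_map_hookKey (c : Fin d → ℝ) (k : ℝ) (S : Fin d → Finset ℕ) :
    hookLens c k S = ((symbolHooks S).val.map hookKey).map
      fun p => k * (p.1 : ℝ) + c p.2.1 - c p.2.2 := by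
  rw [Multiset.map_map]
  rfl

lemma mem_symbolHooks {S : Fin d → Finset ℕ} {z : ℕ × ℕ × Fin d × Fin d} :
    z ∈ symbolHooks S ↔ z.1 ∈ S z.2.2.1 ∧ z.2.1 ∉ S z.2.2.2 ∧
      (z.2.1 < z.1 ∨ (z.1 = z.2.1 ∧ z.2.2.2 < z.2.2.1)) := by
  simp only [symbolHooks, mem_filter, mem_product, mem_range, mem_univ, and_true,
    and_iff_right_iff_imp]
  rintro ⟨ha, -, hba⟩
  have : z.1 ≤ univ.sup fun i => (S i).sup id :=
    (le_sup (f := id) ha).trans (le_sup (f := fun i => (S i).sup id) (mem_univ _))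
  omega

lemma filter_symbolHooks_hookKey_eq {S : Fin d → Finset ℕ} {ℓ : ℕ} {i j : Fin d}
    (h : 0 < ℓ ∨ j < i) :
    {z ∈ symbolHooks S | hookKey z = (ℓ, i, j)}
      = {a ∈ S i | ℓ ≤ a ∧ a - ℓ ∉ S j}.image fun a => (a, a - ℓ, i, j) := by
  ext ⟨a, b, u, v⟩
  simp only [mem_filter, mem_image, mem_symbolHooks, hookKey, Prod.mk.injEq]
  constructor
  · rintro ⟨⟨ha, hb, hab⟩, hℓ, rfl, rfl⟩
    obtain rfl : b = a - ℓ := by omega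
    exact ⟨a, ⟨ha, by omega, hb⟩, rfl, rfl, rfl, rfl⟩
  · rintro ⟨a, ⟨ha, hℓa, hb⟩, rfl, rfl, rfl, rfl⟩
    refine ⟨⟨ha, hb, ?_⟩, by omega, rfl, rfl⟩
    omega

lemma filter_symbolHooks_hookKey_eq_empty {S : Fin d → Finset ℕ} {i j : Fin d} (h : i ≤ j) :
    {z ∈ symbolHooks S | hookKey z = (0, i, j)} = ∅ := by
  refine filter_eq_empty_iff.2 fun ⟨a, b, u, v⟩ hz hkey => ?_
  simp only [hookKey, Prod.mk.injEq] at hkey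
  obtain ⟨hab, rfl, rfl⟩ := hkey
  obtain ⟨-, -, hba | ⟨-, hji⟩⟩ := mem_symbolHooks.1 hz
  · dsimp only at hab hba
    omega
  · exact absurd h (not_le.2 hji)

lemma count_map_hookKey (S : Fin d → Finset ℕ) (ℓ : ℕ) (i j : Fin d) :
    ((symbolHooks S).val.map hookKey).count (ℓ, i, j)
      = if 0 < ℓ ∨ j < i then #{a ∈ S i | ℓ ≤ a ∧ a - ℓ ∉ S j} else 0 := by
  rw [Multiset.count_map, Multiset.filter_congr fun z _ => eq_comm]
  change #{z ∈ symbolHooks S | hookKey z = (ℓ, i, j)} = _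
  split_ifs with h
  · rw [filter_symbolHooks_hookKey_eq h, card_image_of_injective]
    exact fun a a' haa' => (Prod.mk.inj haa').1
  · obtain rfl : ℓ = 0 := by omega
    rw [filter_symbolHooks_hookKey_eq_empty (not_lt.1 fun hji => h (Or.inr hji)), card_empty]

end

lemma card_sub_le_card_filter_sub_notMem (A B : Finset ℕ) (ℓ : ℕ) :
    #A - (#B + ℓ) ≤ #{a ∈ A | ℓ ≤ a ∧ a - ℓ ∉ B} := by
  have hcover : A ⊆ {a ∈ A | ℓ ≤ a ∧ a - ℓ ∉ B} ∪ (range ℓ ∪ B.image (· + ℓ)) := by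
    intro a ha
    simp only [mem_union, mem_filter, mem_range, mem_image]
    by_cases hℓa : ℓ ≤ a
    · by_cases hB : a - ℓ ∈ B
      · exact Or.inr (Or.inr ⟨a - ℓ, hB, by omega⟩)
      · exact Or.inl ⟨ha, hℓa, hB⟩
    · exact Or.inr (Or.inl (by omega))
  have := calc
    #A ≤ #{a ∈ A | ℓ ≤ a ∧ a - ℓ ∉ B} + (#(range ℓ) + #(B.image (· + ℓ))) :=
      (card_le_card hcover).trans <| (card_union_le _ _).trans <|
        Nat.add_le_add_left (card_union_le _ _) _
    _ ≤ #{a ∈ A | ℓ ≤ a ∧ a - ℓ ∉ B} + (ℓ + #B) := by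
      rw [card_range]
      exact Nat.add_le_add_left (Nat.add_le_add_left card_image_le _) _
  omega

lemma card_filter_range_sub_notMem_range (x y ℓ : ℕ) :
    #{a ∈ range x | ℓ ≤ a ∧ a - ℓ ∉ range y} = x - (y + ℓ) := by
  have : {a ∈ range x | ℓ ≤ a ∧ a - ℓ ∉ range y} = Ico (y + ℓ) x := by
    ext a
    simp only [mem_filter, mem_range, mem_Ico]
    omega
  rw [this, Nat.card_Ico]

theorem hookLens_core_le_general (d : ℕ) (S : Fin d → Finset ℕ)
    (c : Fin d → ℝ) (k : ℝ) :
    hookLens c k (coreSymbol S) ≤ hookLens c k S := by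
  rw [hookLens_eq_map_hookKey, hookLens_eq_map_hookKey]
  refine Multiset.map_le_map (Multiset.le_iff_count.2 fun ⟨ℓ, i, j⟩ => ?_)
  rw [count_map_hookKey, count_map_hookKey]
  split_ifs
  · rw [coreSymbol, coreSymbol, card_filter_range_sub_notMem_range]
    exact card_sub_le_card_filter_sub_notMem (S i) (S j) ℓ
  · rfl

/-- For any `d`-hook data tuple `δ`, the multiset `𝓗^δ(C)` of `δ`-lengths of the
hooks of the core `C = C(S)` is a sub-multiset of `𝓗^δ(S)`. -/
theorem hookLens_core_le (d : ℕ) (hd : 0 < d) (S : Fin d → Finset ℕ)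
    (c : Fin d → ℝ) (k : ℝ) (hk : 0 ≤ k) :
    hookLens c k (coreSymbol S) ≤ hookLens c k S :=
  hookLens_core_le_general d S c k
end

section
/- Let S = (X_0,…,X_{d−1}) be a d-symbol with balanced quotient Q = Q(S) and core C = C(S), where |X_i| = x_i. Let δ* = (0,1,…,d−1; d) and δ*_S = (x_0 d, 1 + x_1 d, …, (d−1) + x_{d−1} d; d). Then there is a multiset equality 𝓗^{δ*}(S) = 𝓗^{δ*}(C) ∪ abs(𝓗^{δ*_S}(Q)), where abs(𝓗^{δ*_S}(Q)) = {|h| : h ∈ 𝓗^{δ*_S}(Q)} (as a multiset) and ∪ is multiset union (sum). -/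
/-!
Sort the hooks `(a, b, i, j)` of a symbol by their type `(i, j, a − b)`: the `δ*`-length
`d (a − b) + i − j` depends only on the type, and the hooks of type `(i, j, n)` correspond to the
elements of `X_i \ X_j^{+n}`. A β-set is determined by its size and its partition, so
`X_i^{+s} = Y_i^{+t}` whenever both sides have the same size; after shifting everything far
enough, `|X_i \ X_j^{+n}|` becomes `|Y_i \ Y_j^{+m}|` with `m = n + x_j − x_i` when
`x_i ≤ x_j + n`. When `x_i ≥ x_j + n`, counting `X_j^{+n} \ X_i` instead gives
`(x_i − x_j − n) + |Y_j \ Y_i^{+(x_i − x_j − n)}|`, and `x_i − x_j − n` is the number of hooks of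
type `(i, j, n)` of the core. In both cases the `δ*_S`-length of the quotient hook is `±` the
`δ*`-length of the type.
-/

open Finset

lemma Multiset.filter_erase {α : Type*} [DecidableEq α] (p : α → Prop)
    [DecidablePred p] (s : Multiset α) (a : α) :
    (s.erase a).filter p = (s.filter p).erase a := by
  rw [← Multiset.sub_singleton, Multiset.filter_sub, Multiset.filter_singleton]
  split_ifs with ha
  · rw [Multiset.sub_singleton]
  · rw [Multiset.empty_eq_zero, Multiset.sub_zero,
      Multiset.erase_of_notMem fun hm => ha (Multiset.of_mem_filter hm)]

lemma Finset.card_range_sdiff_range (a b : ℕ) : (range a \ range b).card = a - b := by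
  rw [range_eq_Ico, range_eq_Ico, Ico_sdiff_Ico_left, Nat.card_Ico, Nat.zero_max]

namespace BetaSet

lemma mem_shiftUp {X : Finset ℕ} {s a : ℕ} : a ∈ shiftUp X s ↔ a < s ∨ a - s ∈ X := by
  simp only [shiftUp, mem_union, mem_image, mem_range]
  constructor
  · rintro (⟨b, hb, rfl⟩ | h)
    · exact Or.inr (by simpa using hb)
    · exact Or.inl h
  · rintro (h | h)
    · exact Or.inr h
    · by_cases has : a < s
      · exact Or.inr has
      · exact Or.inl ⟨a - s, h, by omega⟩

lemma card_shiftUp (X : Finset ℕ) (s : ℕ) : (shiftUp X s).card = X.card + s := by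
  rw [shiftUp, card_union_of_disjoint, card_image_of_injective _ (add_left_injective s),
    card_range]
  simp only [disjoint_left, mem_image, mem_range]
  omega

lemma shiftUp_zero (X : Finset ℕ) : shiftUp X 0 = X := by
  ext a
  simp [mem_shiftUp]

lemma shiftUp_shiftUp (X : Finset ℕ) (s t : ℕ) :
    shiftUp (shiftUp X s) t = shiftUp X (s + t) := by
  ext a
  simp only [mem_shiftUp, Nat.sub_sub, add_comm t s]
  by_cases ha : a < s + t
  · have hlow : a < t ∨ a - t < s := by omega
    simp only [ha, true_or, iff_true]
    tauto
  · have ht : ¬a < t := by omega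
    have hs : ¬a - t < s := by omega
    simp only [ha, ht, hs, false_or]

lemma shiftUp_range (b n : ℕ) : shiftUp (range b) n = range (b + n) := by
  ext a
  simp only [mem_shiftUp, mem_range]
  omega

lemma shiftUp_sdiff_shiftUp (A C : Finset ℕ) (s : ℕ) :
    shiftUp A s \ shiftUp C s = (A \ C).image (· + s) := by
  ext a
  simp only [mem_sdiff, mem_shiftUp, mem_image]
  constructor
  · rintro ⟨h | hA, hC⟩
    · exact absurd (Or.inl h) hC
    · exact ⟨a - s, ⟨hA, fun h => hC (Or.inr h)⟩, by omega⟩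
  · rintro ⟨b, ⟨hA, hC⟩, rfl⟩
    simpa using ⟨hA, hC⟩

lemma card_shiftUp_sdiff_shiftUp (A C : Finset ℕ) (s : ℕ) :
    (shiftUp A s \ shiftUp C s).card = (A \ C).card := by
  rw [shiftUp_sdiff_shiftUp, card_image_of_injective _ (add_left_injective s)]

/-- For `a ∈ X`, the part of `p(X)` contributed by `a`. -/
def gapsBelow (X : Finset ℕ) (a : ℕ) : ℕ := (range a \ X).card

lemma partitionOf_eq_filter_gapsBelow (X : Finset ℕ) :
    partitionOf X = (X.val.map (gapsBelow X)).filter (· ≠ 0) := by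
  rw [partitionOf]
  congr 1
  refine Multiset.map_congr rfl fun a _ => ?_
  rw [gapsBelow, card_sdiff, card_range]
  congr 2
  ext b
  simp [and_comm]

lemma gapsBelow_mono (X : Finset ℕ) : Monotone (gapsBelow X) := fun _ _ h =>
  card_le_card (sdiff_subset_sdiff (range_subset_range.2 h) subset_rfl)

lemma gapsBelow_max' {X : Finset ℕ} (h : X.Nonempty) :
    gapsBelow X (X.max' h) + X.card = X.max' h + 1 := by
  have hsub : X ⊆ range (X.max' h + 1) := fun b hb =>
    mem_range.2 (Nat.lt_succ_of_le (X.le_max' b hb))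
  have hcard := card_le_card hsub
  rw [card_range] at hcard
  rw [gapsBelow, ← insert_sdiff_of_mem _ (X.max'_mem h), ← range_add_one,
    card_sdiff_of_subset hsub, card_range]
  omega

lemma sup_partitionOf {X : Finset ℕ} (h : X.Nonempty) :
    (partitionOf X).sup = gapsBelow X (X.max' h) := by
  rw [partitionOf_eq_filter_gapsBelow]
  refine le_antisymm (Multiset.sup_le.2 fun p hp => ?_) ?_
  · obtain ⟨a, ha, rfl⟩ := Multiset.mem_map.1 (Multiset.mem_of_mem_filter hp)
    exact gapsBelow_mono X (X.le_max' a ha)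
  · rcases eq_or_ne (gapsBelow X (X.max' h)) 0 with h0 | h0
    · simp [h0]
    · exact Multiset.le_sup (Multiset.mem_filter.2
        ⟨Multiset.mem_map_of_mem _ (X.max'_mem h), h0⟩)

lemma partitionOf_erase_max' {X : Finset ℕ} (h : X.Nonempty) :
    partitionOf (X.erase (X.max' h)) = (partitionOf X).erase (partitionOf X).sup := by
  have hgaps : ∀ b ∈ X.erase (X.max' h), gapsBelow (X.erase (X.max' h)) b = gapsBelow X b := by
    intro b hb
    have hlt : b < X.max' h :=
      lt_of_le_of_ne (X.le_max' b (mem_of_mem_erase hb)) (ne_of_mem_erase hb)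
    rw [gapsBelow, gapsBelow]
    congr 1
    ext c
    simp only [mem_sdiff, mem_range, mem_erase]
    constructor
    · rintro ⟨hc, hn⟩
      exact ⟨hc, fun hx => hn ⟨by omega, hx⟩⟩
    · rintro ⟨hc, hn⟩
      exact ⟨hc, fun hx => hn hx.2⟩
  rw [sup_partitionOf h, partitionOf_eq_filter_gapsBelow, partitionOf_eq_filter_gapsBelow,
    Multiset.map_congr rfl hgaps, erase_val, Multiset.map_erase_of_mem _ _ (X.max'_mem h),
    Multiset.filter_erase]

theorem eq_of_card_eq_of_partitionOf_eq {U V : Finset ℕ} (hcard : U.card = V.card)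
    (hp : partitionOf U = partitionOf V) : U = V := by
  induction h : U.card generalizing U V with
  | zero => rw [card_eq_zero.1 h, card_eq_zero.1 (hcard ▸ h : V.card = 0)]
  | succ n ih =>
    have hU : U.Nonempty := card_pos.1 (by omega)
    have hV : V.Nonempty := card_pos.1 (by omega)
    have hmax : U.max' hU = V.max' hV := by
      have hgU := gapsBelow_max' hU
      have hgV := gapsBelow_max' hV
      rw [← sup_partitionOf hU, hp] at hgU
      rw [← sup_partitionOf hV] at hgV
      omega
    have herase : U.erase (U.max' hU) = V.erase (V.max' hV) := by
      refine ih (by rw [card_erase_of_mem (U.max'_mem hU), card_erase_of_mem (V.max'_mem hV),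
          hcard]) (by rw [partitionOf_erase_max', partitionOf_erase_max', hp])
        (by rw [card_erase_of_mem (U.max'_mem hU), h, Nat.add_sub_cancel])
    rw [← insert_erase (U.max'_mem hU), ← insert_erase (V.max'_mem hV), herase, hmax]

lemma val_shiftUp (X : Finset ℕ) (s : ℕ) :
    (shiftUp X s).val = X.val.map (· + s) + (range s).val := by
  have hdisj : Disjoint (X.image (· + s)) (range s) := by
    simp only [disjoint_left, mem_image, mem_range]
    omega
  rw [shiftUp, ← disjUnion_eq_union _ _ hdisj, disjUnion_val,
    image_val_of_injOn (add_left_injective s).injOn]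

lemma gapsBelow_shiftUp_add (X : Finset ℕ) (s a : ℕ) :
    gapsBelow (shiftUp X s) (a + s) = gapsBelow X a := by
  rw [gapsBelow, gapsBelow, ← shiftUp_range, card_shiftUp_sdiff_shiftUp]

lemma gapsBelow_shiftUp_of_lt (X : Finset ℕ) {s a : ℕ} (h : a < s) :
    gapsBelow (shiftUp X s) a = 0 := by
  rw [gapsBelow, card_eq_zero, sdiff_eq_empty_iff_subset]
  intro b hb
  exact mem_shiftUp.2 (Or.inl ((mem_range.1 hb).trans h))

lemma partitionOf_shiftUp (X : Finset ℕ) (s : ℕ) :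
    partitionOf (shiftUp X s) = partitionOf X := by
  have hzero : ((range s).val.map (gapsBelow (shiftUp X s))).filter (· ≠ 0) = 0 :=
    Multiset.filter_eq_nil.2 fun a ha => by
      obtain ⟨u, hu, rfl⟩ := Multiset.mem_map.1 ha
      exact not_not.2 (gapsBelow_shiftUp_of_lt X (mem_range.1 hu))
  rw [partitionOf_eq_filter_gapsBelow, partitionOf_eq_filter_gapsBelow, val_shiftUp,
    Multiset.map_add, Multiset.filter_add, hzero, add_zero, Multiset.map_map]
  exact congrArg _ (Multiset.map_congr rfl fun a _ => gapsBelow_shiftUp_add X s a)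

lemma shiftUp_eq_shiftUp_of_partitionOf_eq {X X' : Finset ℕ} {s s' : ℕ}
    (hp : partitionOf X = partitionOf X') (h : X.card + s = X'.card + s') :
    shiftUp X s = shiftUp X' s' :=
  eq_of_card_eq_of_partitionOf_eq (by rw [card_shiftUp, card_shiftUp, h])
    (by rw [partitionOf_shiftUp, partitionOf_shiftUp, hp])

lemma card_sdiff_shiftUp_eq_of_partitionOf_eq {A B A' B' : Finset ℕ} {n m : ℕ}
    (hA : partitionOf A = partitionOf A') (hB : partitionOf B = partitionOf B')
    (h : B.card + n + A'.card = B'.card + m + A.card) :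
    (A \ shiftUp B n).card = (A' \ shiftUp B' m).card := by
  rw [← card_shiftUp_sdiff_shiftUp A _ A'.card, ← card_shiftUp_sdiff_shiftUp A' _ A.card,
    shiftUp_shiftUp, shiftUp_shiftUp, shiftUp_eq_shiftUp_of_partitionOf_eq hA (add_comm _ _),
    shiftUp_eq_shiftUp_of_partitionOf_eq hB
      (by omega : B.card + (n + A'.card) = B'.card + (m + A.card))]

lemma card_sdiff_shiftUp_add (A B : Finset ℕ) (n : ℕ) :
    (A \ shiftUp B n).card + B.card + n = (shiftUp B n \ A).card + A.card := by
  have hA := card_sdiff_add_card_inter A (shiftUp B n)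
  have hB := card_sdiff_add_card_inter (shiftUp B n) A
  rw [card_shiftUp, inter_comm] at hB
  omega

end BetaSet

namespace SymbolHook

open BetaSet

variable {d : ℕ}

lemma le_sup_sup_of_mem {T : Fin d → Finset ℕ} {i : Fin d} {a : ℕ} (ha : a ∈ T i) :
    a ≤ univ.sup fun i => (T i).sup id :=
  (le_sup (f := id) ha).trans (le_sup (f := fun i => (T i).sup id) (mem_univ i))

lemma mem_symbolHooks {T : Fin d → Finset ℕ} {z : ℕ × ℕ × Fin d × Fin d} :
    z ∈ symbolHooks T ↔ z.1 ∈ T z.2.2.1 ∧ z.2.1 ∉ T z.2.2.2 ∧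
      (z.2.1 < z.1 ∨ (z.1 = z.2.1 ∧ z.2.2.2 < z.2.2.1)) := by
  rw [symbolHooks, mem_filter, and_iff_right_iff_imp]
  intro h
  have := le_sup_sup_of_mem h.1
  simp only [mem_product, mem_range, mem_univ, and_true]
  omega

def hookType (z : ℕ × ℕ × Fin d × Fin d) : Fin d × Fin d × ℕ := (z.2.2.1, z.2.2.2, z.1 - z.2.1)

def IsHookType (t : Fin d × Fin d × ℕ) : Prop := 0 < t.2.2 ∨ t.2.1 < t.1

def typeLen (c : Fin d → ℝ) (k : ℝ) (t : Fin d × Fin d × ℕ) : ℝ := k * t.2.2 + c t.1 - c t.2.1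

lemma hookLens_eq_map_typeLen (c : Fin d → ℝ) (k : ℝ) (T : Fin d → Finset ℕ) :
    hookLens c k T = ((symbolHooks T).val.map hookType).map (typeLen c k) := by
  rw [hookLens, Multiset.map_map]
  rfl

lemma isHookType_hookType {T : Fin d → Finset ℕ} {z : ℕ × ℕ × Fin d × Fin d}
    (hz : z ∈ symbolHooks T) : IsHookType (hookType z) := by
  obtain ⟨-, -, h | ⟨h, hlt⟩⟩ := mem_symbolHooks.1 hz
  · exact Or.inl (Nat.sub_pos_of_lt h)
  · exact Or.inr hlt

lemma card_filter_hookType_eq {T : Fin d → Finset ℕ} {t : Fin d × Fin d × ℕ}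
    (ht : IsHookType t) :
    ((symbolHooks T).filter (hookType · = t)).card =
      (T t.1 \ shiftUp (T t.2.1) t.2.2).card := by
  obtain ⟨i, j, n⟩ := t
  have himage : (symbolHooks T).filter (hookType · = (i, j, n)) =
      (T i \ shiftUp (T j) n).image fun a => (a, a - n, i, j) := by
    ext ⟨a, b, u, v⟩
    simp only [mem_filter, mem_symbolHooks, hookType, mem_image, mem_sdiff, mem_shiftUp,
      Prod.mk.injEq, not_or]
    constructor
    · rintro ⟨⟨ha, hb, hab⟩, rfl, rfl, rfl⟩
      have hba : b ≤ a := by rcases hab with h | ⟨h, -⟩ <;> omega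
      refine ⟨a, ⟨ha, by omega, ?_⟩, rfl, by omega, rfl, rfl⟩
      rwa [Nat.sub_sub_self hba]
    · rintro ⟨a, ⟨ha, hn, hb⟩, rfl, rfl, rfl, rfl⟩
      refine ⟨⟨ha, hb, ?_⟩, rfl, rfl, by omega⟩
      rcases ht with h | h
      · exact Or.inl (by simp only at h; omega)
      · rcases Nat.eq_zero_or_pos n with rfl | h'
        · exact Or.inr ⟨by omega, h⟩
        · exact Or.inl (by omega)
  rw [himage, card_image_of_injective _ fun a a' h => (Prod.mk.inj h).1]

lemma card_filter_hookType_eq_zero {T : Fin d → Finset ℕ} {t : Fin d × Fin d × ℕ}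
    (ht : ¬IsHookType t) : ((symbolHooks T).filter (hookType · = t)).card = 0 :=
  card_eq_zero.2 (filter_eq_empty_iff.2 fun _ hz h => ht (h ▸ isHookType_hookType hz))

/-- The type of `S`-hooks assigned to a hook of type `(u, v, m)` of the balanced quotient, where
`x i = |X_i|`: its `δ*_S`-length `d (m + x u − x v) + u − v` is, up to sign, the `δ*`-length of
this type. -/
def quotType (x : Fin d → ℕ) (t : Fin d × Fin d × ℕ) : Fin d × Fin d × ℕ :=
  if x t.2.1 < x t.1 + t.2.2 ∨ (x t.2.1 = x t.1 + t.2.2 ∧ t.2.1 < t.1) then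
    (t.1, t.2.1, x t.1 + t.2.2 - x t.2.1)
  else (t.2.1, t.1, x t.2.1 - x t.1 - t.2.2)

def quotTypeInv (x : Fin d → ℕ) (t : Fin d × Fin d × ℕ) : Fin d × Fin d × ℕ :=
  if x t.2.1 + t.2.2 < x t.1 ∨ (x t.2.1 + t.2.2 = x t.1 ∧ t.1 < t.2.1) then
    (t.2.1, t.1, x t.1 - x t.2.1 - t.2.2)
  else (t.1, t.2.1, x t.2.1 + t.2.2 - x t.1)

lemma isHookType_quotType (x : Fin d → ℕ) {s : Fin d × Fin d × ℕ} (hs : IsHookType s) :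
    IsHookType (quotType x s) := by
  obtain ⟨u, v, m⟩ := s
  unfold IsHookType quotType at *
  dsimp only at *
  -- `omega` treats `x u` and `x v` as unrelated atoms, so the case `u = v` is split off
  rcases eq_or_ne u v with rfl | huv <;>
    split_ifs <;> simp only [Fin.lt_def, ne_eq, Fin.ext_iff] at * <;> omega

lemma isHookType_quotTypeInv (x : Fin d → ℕ) {t : Fin d × Fin d × ℕ} (ht : IsHookType t) :
    IsHookType (quotTypeInv x t) := by
  obtain ⟨i, j, n⟩ := t
  unfold IsHookType quotTypeInv at *
  dsimp only at *
  rcases eq_or_ne i j with rfl | hij <;>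
    split_ifs <;> simp only [Fin.lt_def, ne_eq, Fin.ext_iff] at * <;> omega

lemma quotTypeInv_quotType (x : Fin d → ℕ) {s : Fin d × Fin d × ℕ} (hs : IsHookType s) :
    quotTypeInv x (quotType x s) = s := by
  obtain ⟨u, v, m⟩ := s
  unfold IsHookType quotType quotTypeInv at *
  dsimp only at *
  rcases eq_or_ne u v with rfl | huv <;>
    split_ifs <;> simp only [Prod.mk.injEq, Fin.lt_def, ne_eq, Fin.ext_iff, true_and] at * <;>
    omega

lemma quotType_quotTypeInv (x : Fin d → ℕ) {t : Fin d × Fin d × ℕ} (ht : IsHookType t) :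
    quotType x (quotTypeInv x t) = t := by
  obtain ⟨i, j, n⟩ := t
  unfold IsHookType quotType quotTypeInv at *
  dsimp only at *
  rcases eq_or_ne i j with rfl | hij <;>
    split_ifs <;> simp only [Prod.mk.injEq, Fin.lt_def, ne_eq, Fin.ext_iff, true_and] at * <;>
    omega

lemma quotType_eq_iff (x : Fin d → ℕ) {s t : Fin d × Fin d × ℕ} (hs : IsHookType s)
    (ht : IsHookType t) : quotType x s = t ↔ s = quotTypeInv x t := by
  constructor
  · rintro rfl
    exact (quotTypeInv_quotType x hs).symm
  · rintro rfl
    exact quotType_quotTypeInv x ht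

lemma typeLen_natCast_nonneg {t : Fin d × Fin d × ℕ} (ht : 0 < t.2.2 ∨ t.2.1 ≤ t.1) :
    0 ≤ typeLen (fun i => ((i : ℕ) : ℝ)) d t := by
  obtain ⟨i, j, n⟩ := t
  have hj : ((j : ℕ) : ℝ) < d := by exact_mod_cast j.isLt
  simp only [typeLen]
  rcases ht with h | h
  · have : (d : ℝ) ≤ d * n := le_mul_of_one_le_right (by positivity) (by exact_mod_cast h)
    linarith [Nat.cast_nonneg (α := ℝ) (i : ℕ)]
  · have : ((j : ℕ) : ℝ) ≤ (i : ℕ) := by exact_mod_cast h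
    nlinarith [Nat.cast_nonneg (α := ℝ) n, Nat.cast_nonneg (α := ℝ) d]

lemma abs_typeLen_eq_typeLen_quotType (x : Fin d → ℕ) (s : Fin d × Fin d × ℕ) :
    |typeLen (fun i => ((i : ℕ) : ℝ) + (x i : ℝ) * d) d s| =
      typeLen (fun i => ((i : ℕ) : ℝ)) d (quotType x s) := by
  obtain ⟨u, v, m⟩ := s
  unfold quotType
  dsimp only
  split_ifs with h
  · have hlen : typeLen (fun i => ((i : ℕ) : ℝ) + (x i : ℝ) * d) d (u, v, m) =
        typeLen (fun i => ((i : ℕ) : ℝ)) d (u, v, x u + m - x v) := by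
      simp only [typeLen]
      push_cast [Nat.cast_sub (show x v ≤ x u + m by omega)]
      ring
    rw [hlen, abs_of_nonneg (typeLen_natCast_nonneg ?_)]
    simp only [Fin.lt_def, Fin.le_def] at h ⊢
    omega
  · have hlen : typeLen (fun i => ((i : ℕ) : ℝ) + (x i : ℝ) * d) d (u, v, m) =
        -typeLen (fun i => ((i : ℕ) : ℝ)) d (v, u, x v - x u - m) := by
      simp only [typeLen]
      push_cast [Nat.cast_sub (show x u ≤ x v by omega),
        Nat.cast_sub (show m ≤ x v - x u by omega)]
      ring
    rw [hlen, abs_neg, abs_of_nonneg (typeLen_natCast_nonneg ?_)]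
    simp only [Fin.lt_def, Fin.le_def] at h ⊢
    omega

theorem card_filter_hookType_eq_core_add_quot {S Y : Fin d → Finset ℕ}
    (hY : IsBalancedQuotient S Y) (t : Fin d × Fin d × ℕ) :
    ((symbolHooks S).filter (hookType · = t)).card =
      ((symbolHooks (coreSymbol S)).filter (hookType · = t)).card +
        ((symbolHooks Y).filter fun z =>
          quotType (fun i => (S i).card) (hookType z) = t).card := by
  by_cases ht : IsHookType t
  · rw [filter_congr fun z hz => quotType_eq_iff _ (isHookType_hookType hz) ht,
      card_filter_hookType_eq ht, card_filter_hookType_eq ht,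
      card_filter_hookType_eq (isHookType_quotTypeInv _ ht)]
    obtain ⟨i, j, n⟩ := t
    simp only [coreSymbol, shiftUp_range, card_range_sdiff_range]
    unfold quotTypeInv
    split_ifs with h <;> dsimp only at h ⊢
    · have hflip := card_sdiff_shiftUp_add (S i) (S j) n
      have htransfer := card_sdiff_shiftUp_eq_of_partitionOf_eq (A := shiftUp (S j) n)
        (B := S i) (A' := Y j) (B' := Y i) (n := 0) (m := (S i).card - (S j).card - n)
        (by rw [partitionOf_shiftUp, (hY j).2]) (hY i).2.symm
        (by rw [card_shiftUp, (hY i).1, (hY j).1]; omega)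
      rw [shiftUp_zero] at htransfer
      omega
    · rw [card_sdiff_shiftUp_eq_of_partitionOf_eq (m := (S j).card + n - (S i).card)
        (hY i).2.symm (hY j).2.symm (by rw [(hY i).1, (hY j).1]; omega)]
      omega
  · rw [card_filter_hookType_eq_zero ht, card_filter_hookType_eq_zero ht,
      card_eq_zero.2 (filter_eq_empty_iff.2 fun z hz h =>
        ht (by rw [← h]; exact isHookType_quotType _ (isHookType_hookType hz)))]

end SymbolHook

open SymbolHook

theorem hookLens_partition_tuple_eq_general (d : ℕ) (S Y : Fin d → Finset ℕ)
    (hY : IsBalancedQuotient S Y) :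
    hookLens (fun i => ((i : ℕ) : ℝ)) (d : ℝ) S =
      hookLens (fun i => ((i : ℕ) : ℝ)) (d : ℝ) (coreSymbol S) +
        (hookLens (fun i => ((i : ℕ) : ℝ) + ((S i).card : ℝ) * (d : ℝ)) (d : ℝ) Y).map
          (fun r => |r|) := by
  have htypes : (symbolHooks S).val.map hookType =
      (symbolHooks (coreSymbol S)).val.map hookType +
        (symbolHooks Y).val.map (quotType (fun i => (S i).card) ∘ hookType) := by
    ext t
    simp only [Multiset.count_add, Multiset.count_map, ← filter_val, card_val,
      Function.comp_apply, eq_comm (a := t)]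
    exact card_filter_hookType_eq_core_add_quot hY t
  rw [hookLens_eq_map_typeLen, hookLens_eq_map_typeLen, hookLens_eq_map_typeLen, htypes,
    Multiset.map_add]
  congr 1
  simp only [Multiset.map_map]
  exact Multiset.map_congr rfl fun z _ => (abs_typeLen_eq_typeLen_quotType _ (hookType z)).symm

/-- With `δ* = (0,1,…,d−1; d)` and `δ*_S = (x_0 d, 1 + x_1 d, …, (d−1) + x_{d−1} d; d)`:
`𝓗^{δ*}(S) = 𝓗^{δ*}(C) ∪ abs(𝓗^{δ*_S}(Q))` as multisets. -/
theorem hookLens_partition_tuple_eq (d : ℕ) (hd : 0 < d) (S Y : Fin d → Finset ℕ)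
    (hY : IsBalancedQuotient S Y) :
    hookLens (fun i => ((i : ℕ) : ℝ)) (d : ℝ) S =
      hookLens (fun i => ((i : ℕ) : ℝ)) (d : ℝ) (coreSymbol S) +
        (hookLens (fun i => ((i : ℕ) : ℝ) + ((S i).card : ℝ) * (d : ℝ)) (d : ℝ) Y).map
          (fun r => |r|) :=
  hookLens_partition_tuple_eq_general d S Y hY
end

section
/- Let d, ℓ ≥ 1, e ∈ {0,…,d−1}, and let σ = σ_{d,ℓ,e} be the permutation of ℕ defined by σ(r(dℓ) + sd + t) = r(dℓ) + sd + ((t + re) mod d) for r ∈ ℕ, s ∈ {0,…,ℓ−1}, t ∈ {0,…,d−1}. For a d-symbol S let σ(S) = s_d(σ(s_d^{-1}(S))) be its (ℓ,e)-twist. Then the multiset of lengths a − b of the long hooks (those with a > b) of σ(S) equals the multiset of lengths of the long hooks of S: 𝓗_{>0}(σ(S)) = 𝓗_{>0}(S). -/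
/-!
The permutation `σ = σ_{d,ℓ,e}` maps each block `{qd, …, qd + d − 1}` to itself, i.e. it
preserves `n / d`. On `d`-symbols this means that `σ` moves the bead at level `k` of
runner `i` to level `k` of some runner `i'`, where `i' + kd = σ(i + kd)`. Hence a long hook
`(a, b, i, j)` of `S` goes to the long hook `(a, b, i', j')` of `σ(S)`, with the same length
`a − b`, and this is a bijection since `σ⁻¹` preserves blocks as well. For hooks with `a = b`
the condition `i > j` is not preserved, which is why only long hooks are compared.
-/

section Twist

lemma twistFun_eq (d ℓ e n : ℕ) :
    twistFun d ℓ e n = d * (n / d) + (n % d + n / d / ℓ * e) % d := by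
  have hblock : d * ℓ * (n / d / ℓ) + d * (n / d % ℓ) = d * (n / d) := by
    rw [mul_assoc, ← mul_add, Nat.div_add_mod]
  rw [twistFun, Nat.mod_mul_right_div_self, ← Nat.div_div_eq_div_mul, hblock]

lemma twistFun_div (d ℓ e n : ℕ) : twistFun d ℓ e n / d = n / d := by
  rcases Nat.eq_zero_or_pos d with rfl | hd
  · simp
  rw [twistFun_eq, Nat.mul_add_div hd, Nat.div_eq_of_lt (Nat.mod_lt _ hd), add_zero]

lemma twistFun_mod (d ℓ e n : ℕ) :
    twistFun d ℓ e n % d = (n % d + n / d / ℓ * e) % d := by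
  rw [twistFun_eq, Nat.mul_add_mod, Nat.mod_mod]

lemma twistFun_twistFun {d e₁ e₂ : ℕ} (ℓ n : ℕ) (h : d ∣ e₁ + e₂) :
    twistFun d ℓ e₂ (twistFun d ℓ e₁ n) = n := by
  obtain ⟨c, hc⟩ := h
  rw [twistFun_eq d ℓ e₂, twistFun_div, twistFun_mod, Nat.mod_add_mod, add_assoc, ← mul_add,
    hc, mul_left_comm, Nat.add_mul_mod_self_left, Nat.mod_mod, Nat.div_add_mod]

def twistPerm (d ℓ e : ℕ) : Equiv.Perm ℕ where
  toFun := twistFun d ℓ e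
  invFun := twistFun d ℓ ((d - 1) * e)
  left_inv n := by
    rcases d with _ | d
    · simp [twistFun]
    · exact twistFun_twistFun ℓ n ⟨e, by simp [add_one_mul, add_comm]⟩
  right_inv n := by
    rcases d with _ | d
    · simp [twistFun]
    · exact twistFun_twistFun ℓ n ⟨e, by simp [add_one_mul]⟩

end Twist

section Hooks

variable {d : ℕ}

def longHooks (S : Fin d → Finset ℕ) : Finset (ℕ × ℕ × Fin d × Fin d) :=
  (symbolHooks S).filter fun z => z.2.1 < z.1

lemma mem_sd {X : Finset ℕ} {i : Fin d} {a : ℕ} :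
    a ∈ sd d X i ↔ (i : ℕ) + a * d ∈ X := by
  have hd := i.pos
  simp only [sd, Finset.mem_image, Finset.mem_filter]
  constructor
  · rintro ⟨n, ⟨hn, hmod⟩, rfl⟩
    rwa [← hmod, Nat.mod_add_div']
  · intro h
    refine ⟨_, ⟨h, ?_⟩, ?_⟩
    · rw [Nat.add_mul_mod_self_right, Nat.mod_eq_of_lt i.isLt]
    · rw [Nat.add_mul_div_right _ _ hd, Nat.div_eq_of_lt i.isLt, zero_add]

lemma sd_sdInv (S : Fin d → Finset ℕ) : sd d (sdInv d S) = S := by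
  funext i
  ext a
  simp only [mem_sd, sdInv, Finset.mem_biUnion, Finset.mem_univ, true_and, Finset.mem_image]
  constructor
  · rintro ⟨i', k, hk, heq⟩
    have hd := i.pos
    have hi : i' = i := Fin.ext <| by
      simpa [Nat.mod_eq_of_lt] using congrArg (· % d) heq
    subst hi
    rwa [← Nat.eq_of_mul_eq_mul_right hd (Nat.add_left_cancel heq)]
  · exact fun h => ⟨i, a, h, rfl⟩

lemma mem_longHooks_sd {X : Finset ℕ} {z : ℕ × ℕ × Fin d × Fin d} :
    z ∈ longHooks (sd d X) ↔
      (z.2.2.1 : ℕ) + z.1 * d ∈ X ∧ (z.2.2.2 : ℕ) + z.2.1 * d ∉ X ∧ z.2.1 < z.1 := by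
  obtain ⟨a, b, i, j⟩ := z
  simp only [longHooks, symbolHooks, Finset.mem_filter, Finset.mem_product, Finset.mem_range,
    Finset.mem_univ, and_true, mem_sd]
  constructor
  · rintro ⟨⟨_, ha, hb, _⟩, hba⟩
    exact ⟨ha, hb, hba⟩
  · rintro ⟨ha, hb, hba⟩
    have hle : a ≤ Finset.univ.sup fun i => (sd d X i).sup id :=
      (Finset.le_sup (f := id) (mem_sd.2 ha)).trans
        (Finset.le_sup (f := fun i => (sd d X i).sup id) (Finset.mem_univ i))
    exact ⟨⟨⟨by omega, by omega⟩, ha, hb, Or.inl hba⟩, hba⟩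

end Hooks

section BlockPerm

variable {d : ℕ} (σ : Equiv.Perm ℕ)

lemma Equiv.Perm.symm_apply_div (hσ : ∀ n, σ n / d = n / d) (n : ℕ) :
    σ.symm n / d = n / d := by
  conv_rhs => rw [← σ.apply_symm_apply n, hσ]

lemma Equiv.Perm.apply_mod_add_mul (hσ : ∀ n, σ n / d = n / d) (i : Fin d) (a : ℕ) :
    σ (i + a * d) % d + a * d = σ (i + a * d) := by
  have hblock : σ (i + a * d) / d = a := by
    rw [hσ, Nat.add_mul_div_right _ _ i.pos, Nat.div_eq_of_lt i.isLt, zero_add]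
  simpa only [hblock] using Nat.mod_add_div' (σ (i + a * d)) d

def relabelRunners (z : ℕ × ℕ × Fin d × Fin d) : ℕ × ℕ × Fin d × Fin d :=
  (z.1, z.2.1, ⟨σ (z.2.2.1 + z.1 * d) % d, Nat.mod_lt _ z.2.2.1.pos⟩,
    ⟨σ (z.2.2.2 + z.2.1 * d) % d, Nat.mod_lt _ z.2.2.2.pos⟩)

lemma relabelRunners_symm_relabelRunners (hσ : ∀ n, σ n / d = n / d)
    (z : ℕ × ℕ × Fin d × Fin d) : relabelRunners σ.symm (relabelRunners σ z) = z := by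
  obtain ⟨a, b, i, j⟩ := z
  simp only [relabelRunners, σ.apply_mod_add_mul hσ, Equiv.symm_apply_apply,
    Nat.add_mul_mod_self_right, Nat.mod_eq_of_lt (Fin.isLt _)]

def relabelRunnersEquiv (hσ : ∀ n, σ n / d = n / d) :
    Equiv.Perm (ℕ × ℕ × Fin d × Fin d) where
  toFun := relabelRunners σ
  invFun := relabelRunners σ.symm
  left_inv := relabelRunners_symm_relabelRunners σ hσ
  right_inv z := by
    simpa using relabelRunners_symm_relabelRunners σ.symm (σ.symm_apply_div hσ) z

lemma relabelRunners_mem_longHooks_sd_image_iff (hσ : ∀ n, σ n / d = n / d) (X : Finset ℕ)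
    (z : ℕ × ℕ × Fin d × Fin d) :
    relabelRunners σ z ∈ longHooks (sd d (X.image σ)) ↔ z ∈ longHooks (sd d X) := by
  simp only [mem_longHooks_sd, relabelRunners, σ.apply_mod_add_mul hσ,
    σ.injective.mem_finset_image]

lemma longHooks_sd_image (hσ : ∀ n, σ n / d = n / d) (X : Finset ℕ) :
    longHooks (sd d (X.image σ)) =
      (longHooks (sd d X)).map (relabelRunnersEquiv σ hσ).toEmbedding := by
  ext z
  rw [Finset.mem_map_equiv]
  conv_lhs => rw [← (relabelRunnersEquiv σ hσ).apply_symm_apply z]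
  exact relabelRunners_mem_longHooks_sd_image_iff σ hσ X _

theorem longHookLengths_sd_image (hσ : ∀ n, σ n / d = n / d) (X : Finset ℕ) :
    (longHooks (sd d (X.image σ))).val.map (fun z => z.1 - z.2.1) =
      (longHooks (sd d X)).val.map (fun z => z.1 - z.2.1) := by
  rw [longHooks_sd_image σ hσ, Finset.map_val, Multiset.map_map]
  rfl

end BlockPerm

theorem twist_long_hooks_eq_general (d : ℕ) (ℓ : ℕ)
    (e : ℕ) (S : Fin d → Finset ℕ) :
    ((symbolHooks (sd d ((sdInv d S).image (twistFun d ℓ e)))).filter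
        (fun z => z.2.1 < z.1)).val.map (fun z => z.1 - z.2.1) =
      ((symbolHooks S).filter (fun z => z.2.1 < z.1)).val.map (fun z => z.1 - z.2.1) := by
  have h := longHookLengths_sd_image (twistPerm d ℓ e) (twistFun_div d ℓ e) (sdInv d S)
  rwa [sd_sdInv] at h

/-- The multiset of lengths of the long hooks of the `(ℓ,e)`-twist
`σ(S) = s_d(σ(s_d⁻¹(S)))` of a `d`-symbol `S` equals the multiset of lengths of the
long hooks of `S`. -/
theorem twist_long_hooks_eq (d : ℕ) (hd : 0 < d) (ℓ : ℕ) (hℓ : 0 < ℓ)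
    (e : ℕ) (he : e < d) (S : Fin d → Finset ℕ) :
    ((symbolHooks (sd d ((sdInv d S).image (twistFun d ℓ e)))).filter
        (fun z => z.2.1 < z.1)).val.map (fun z => z.1 - z.2.1) =
      ((symbolHooks S).filter (fun z => z.2.1 < z.1)).val.map (fun z => z.1 - z.2.1) :=
  twist_long_hooks_eq_general d ℓ e S
end
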